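/- arXiv:2006.14522 — 3 statements merged into one kernel-verified Lean document; each statement's English description precedes it below -/
import Mathlib

section
/- For every k ∈ ℤ and λ ∈ ℂ, the function ṽ_{k,λ} := v_{k,λ}/ζ_k belongs to C([0,∞)) ∩ C²((0,∞)) and satisfies −(B_k ṽ')'(x) = λ·B_k(x)·ṽ(x) for all x > 0, together with ṽ(0) = 1 and lim_{x→0⁺} B_k(x)ṽ'(x) = 0. -/
/-!
Write `c = 2kπ` and `F x = ∫₀ˣ dy/A(y)`, so that `ζ_k = cosh (c F)`. Since `F' = 1/A`, we get
`A ζ_k' = c sinh (c F)` and `(A ζ_k')' = (c²/A) ζ_k`, while the equation for `v` reads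
`(A v')' = (c²/A − λA) v`: both are Sturm–Liouville equations with the same potential.
For `ṽ = v/ζ_k`, the flux `B_k ṽ' = ζ_k (A v') − v (A ζ_k')` is a Wronskian, whose derivative
`ζ_k (A v')' − v (A ζ_k')' = −λ A ζ_k v = −λ B_k ṽ` loses the potential term, and which tends to
`1·0 − 1·0 = 0` at `0⁺` because `F(0) = 0`.
-/

open MeasureTheory Set Filter

/-- The standing assumptions on the coefficient `A`. -/
def ACond (A : ℝ → ℝ) : Prop :=
  ContinuousOn A (Set.Ici 0) ∧
  ContDiffOn ℝ 1 A (Set.Ioi 0) ∧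
  (∀ x > 0, 0 < A x) ∧
  IntegrableOn (fun x => 1 / A x) (Set.Ioc 0 1) ∧
  (∀ x > 0, 0 ≤ deriv A x / A x) ∧
  AntitoneOn (fun x => deriv A x / A x) (Set.Ioi 0)

/-- `v` solves `v'' + (A'/A) v' + (λ - (2kπ)²/A²) v = 0` on `(0,∞)`, `v(0)=1`, `(Av')(0⁺)=0`. -/
def IsEigenfun (A : ℝ → ℝ) (k : ℤ) (lam : ℂ) (v : ℝ → ℂ) : Prop :=
  ContinuousOn v (Set.Ici 0) ∧
  ContDiffOn ℝ 2 v (Set.Ioi 0) ∧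
  (∀ x > 0,
    deriv (deriv v) x + ((deriv A x / A x : ℝ) : ℂ) * deriv v x
      + (lam - (((2 * (k : ℝ) * Real.pi) ^ 2 / (A x) ^ 2 : ℝ) : ℂ)) * v x = 0) ∧
  v 0 = 1 ∧
  Filter.Tendsto (fun x => (A x : ℂ) * deriv v x) (nhdsWithin 0 (Set.Ioi 0)) (nhds 0)

/-- `ζ_k(x) = cosh(2kπ ∫₀ˣ dy/A(y))`. -/
noncomputable def zeta (A : ℝ → ℝ) (k : ℤ) (x : ℝ) : ℝ :=
  Real.cosh (2 * (k : ℝ) * Real.pi * ∫ y in (0 : ℝ)..x, 1 / A y)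

/-- `B_k(x) = A(x) ζ_k(x)²`. -/
noncomputable def Bfun (A : ℝ → ℝ) (k : ℤ) (x : ℝ) : ℝ :=
  A x * (zeta A k x) ^ 2

open Topology Real

section GroundStateTransform

variable {p u v u' v' : ℝ → ℂ} {x : ℝ}

theorem mul_sq_mul_deriv_div_eq {a b : ℂ} (hu : HasDerivAt u a x) (hv : HasDerivAt v b x)
    (hux : u x ≠ 0) (c : ℂ) :
    c * u x ^ 2 * deriv (fun y => v y / u y) x = u x * (c * b) - v x * (c * a) := by
  have hd : deriv (fun y => v y / u y) x = (b * u x - v x * a) / u x ^ 2 := (hv.div hu hux).deriv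
  rw [hd]
  field_simp

theorem hasDerivAt_mul_sq_mul_deriv_div {q w lam : ℂ}
    (hu : ∀ᶠ y in 𝓝 x, HasDerivAt u (u' y) y) (hv : ∀ᶠ y in 𝓝 x, HasDerivAt v (v' y) y)
    (hu0 : ∀ᶠ y in 𝓝 x, u y ≠ 0)
    (hpu : HasDerivAt (fun y => p y * u' y) (q * u x) x)
    (hpv : HasDerivAt (fun y => p y * v' y) ((q - lam * w) * v x) x) :
    HasDerivAt (fun y => p y * u y ^ 2 * deriv (fun z => v z / u z) y)
      (-(lam * (w * u x ^ 2) * (v x / u x))) x := by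
  have hW := (hu.self_of_nhds.mul hpv).sub (hv.self_of_nhds.mul hpu)
  refine (hW.congr_deriv ?_).congr_of_eventuallyEq ?_
  · field_simp [hu0.self_of_nhds]
    ring
  · filter_upwards [hu, hv, hu0] with y huy hvy hu0y
    exact mul_sq_mul_deriv_div_eq huy hvy hu0y (p y)

end GroundStateTransform

noncomputable def primitiveInv (A : ℝ → ℝ) (x : ℝ) : ℝ := ∫ y in (0 : ℝ)..x, 1 / A y

namespace ACond

variable {A : ℝ → ℝ} {x : ℝ}

theorem continuousOn_inv (hA : ACond A) : ContinuousOn (fun x => 1 / A x) (Ioi 0) :=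
  continuousOn_const.div (hA.1.mono Ioi_subset_Ici_self) fun x hx => (hA.2.2.1 x hx).ne'

theorem intervalIntegrable_inv (hA : ACond A) {b : ℝ} (hb : 0 ≤ b) :
    IntervalIntegrable (fun x => 1 / A x) volume 0 b := by
  have h01 : IntervalIntegrable (fun x => 1 / A x) volume 0 1 :=
    (intervalIntegrable_iff_integrableOn_Ioc_of_le zero_le_one).mpr hA.2.2.2.1
  have h1b : IntervalIntegrable (fun x => 1 / A x) volume 1 (max b 1) := by
    refine (hA.continuousOn_inv.mono fun y hy => ?_).intervalIntegrable
    rw [uIcc_of_le (le_max_right b 1)] at hy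
    exact zero_lt_one.trans_le hy.1
  refine (h01.trans h1b).mono_set (uIcc_subset_uIcc_left ?_)
  rw [uIcc_of_le (zero_le_one.trans (le_max_right b 1))]
  exact ⟨hb, le_max_left b 1⟩

theorem hasDerivAt_primitiveInv (hA : ACond A) (hx : 0 < x) :
    HasDerivAt (primitiveInv A) (1 / A x) x :=
  intervalIntegral.integral_hasDerivAt_right (hA.intervalIntegrable_inv hx.le)
    (hA.continuousOn_inv.stronglyMeasurableAtFilter isOpen_Ioi x hx)
    (hA.continuousOn_inv.continuousAt (Ioi_mem_nhds hx))

theorem continuousOn_primitiveInv (hA : ACond A) : ContinuousOn (primitiveInv A) (Ici 0) := by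
  intro x hx
  have hx1 : (0 : ℝ) ≤ x + 1 := by linarith [mem_Ici.mp hx]
  have hint : IntervalIntegrable (fun y => 1 / A y) volume (min 0 0) (max 0 (x + 1)) := by
    rw [min_self, max_eq_right hx1]
    exact hA.intervalIntegrable_inv hx1
  refine (intervalIntegral.continuousWithinAt_primitive (by simp) hint).mono_of_mem_nhdsWithin ?_
  exact mem_nhdsWithin.mpr ⟨Iio (x + 1), isOpen_Iio, by simp, fun y ⟨hy1, hy2⟩ => ⟨hy2, hy1.le⟩⟩

theorem contDiffOn_primitiveInv (hA : ACond A) : ContDiffOn ℝ 2 (primitiveInv A) (Ioi 0) := by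
  rw [show (2 : WithTop ℕ∞) = 1 + 1 by norm_num, contDiffOn_succ_iff_deriv_of_isOpen isOpen_Ioi]
  refine ⟨fun x hx => (hA.hasDerivAt_primitiveInv hx).differentiableAt.differentiableWithinAt,
    by simp, ?_⟩
  exact (contDiffOn_const.div hA.2.1 fun x hx => (hA.2.2.1 x hx).ne').congr
    fun x hx => (hA.hasDerivAt_primitiveInv hx).deriv

end ACond

section Zeta

variable {A : ℝ → ℝ} {k : ℤ} {x : ℝ}

theorem zeta_eq_cosh (A : ℝ → ℝ) (k : ℤ) (x : ℝ) :
    zeta A k x = cosh (2 * k * π * primitiveInv A x) := rfl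

theorem zeta_zero : zeta A k 0 = 1 := by
  simp [zeta]

theorem continuousOn_zeta (hA : ACond A) : ContinuousOn (zeta A k) (Ici 0) :=
  continuous_cosh.comp_continuousOn (continuousOn_const.mul hA.continuousOn_primitiveInv)

theorem contDiffOn_zeta (hA : ACond A) : ContDiffOn ℝ 2 (zeta A k) (Ioi 0) :=
  contDiff_cosh.comp_contDiffOn (contDiffOn_const.mul hA.contDiffOn_primitiveInv)

theorem hasDerivAt_zeta (hA : ACond A) (hx : 0 < x) :
    HasDerivAt (zeta A k) (2 * k * π * sinh (2 * k * π * primitiveInv A x) / A x) x := by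
  exact ((hA.hasDerivAt_primitiveInv hx).const_mul (2 * k * π)).cosh.congr_deriv (by ring)

theorem hasDerivAt_mul_deriv_zeta (hA : ACond A) (hx : 0 < x) :
    HasDerivAt (fun y => A y * (2 * k * π * sinh (2 * k * π * primitiveInv A y) / A y))
      ((2 * k * π) ^ 2 / A x * zeta A k x) x := by
  have h := (((hA.hasDerivAt_primitiveInv hx).const_mul (2 * k * π)).sinh).const_mul (2 * k * π)
  refine (h.congr_deriv ?_).congr_of_eventuallyEq ?_
  · rw [zeta_eq_cosh]
    ring
  · filter_upwards [Ioi_mem_nhds hx] with y hy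
    field_simp [(hA.2.2.1 y hy).ne']

end Zeta

namespace IsEigenfun

variable {A : ℝ → ℝ} {k : ℤ} {lam : ℂ} {v : ℝ → ℂ} {x : ℝ}

theorem hasDerivAt (hv : IsEigenfun A k lam v) (hx : 0 < x) : HasDerivAt v (deriv v x) x :=
  ((hv.2.1.differentiableOn two_ne_zero).differentiableAt (Ioi_mem_nhds hx)).hasDerivAt

theorem hasDerivAt_mul_deriv (hA : ACond A) (hv : IsEigenfun A k lam v) (hx : 0 < x) :
    HasDerivAt (fun y => (A y : ℂ) * deriv v y)
      ((((2 * k * π) ^ 2 / A x : ℝ) - lam * A x) * v x) x := by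
  have hA' : HasDerivAt A (deriv A x) x :=
    ((hA.2.1.differentiableOn one_ne_zero).differentiableAt (Ioi_mem_nhds hx)).hasDerivAt
  have hv' : HasDerivAt (deriv v) (deriv (deriv v) x) x :=
    (((hv.2.1.deriv_of_isOpen isOpen_Ioi (by norm_num)).differentiableOn one_ne_zero)
      |>.differentiableAt (Ioi_mem_nhds hx)).hasDerivAt
  refine (hA'.ofReal_comp.mul hv').congr_deriv ?_
  have hode := hv.2.2.1 x hx
  have hAx : (A x : ℂ) ≠ 0 := Complex.ofReal_ne_zero.mpr (hA.2.2.1 x hx).ne'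
  push_cast at hode ⊢
  field_simp at hode ⊢
  linear_combination hode

end IsEigenfun

section Bfun

variable {A : ℝ → ℝ} {k : ℤ} {lam : ℂ} {v : ℝ → ℂ} {x : ℝ}

theorem ofReal_Bfun (A : ℝ → ℝ) (k : ℤ) (x : ℝ) :
    (Bfun A k x : ℂ) = A x * (zeta A k x : ℂ) ^ 2 := by
  push_cast [Bfun]
  rfl

theorem hasDerivAt_Bfun_mul_deriv_div_zeta (hA : ACond A) (hv : IsEigenfun A k lam v)
    (hx : 0 < x) :
    HasDerivAt (fun y => (Bfun A k y : ℂ) * deriv (fun z => v z / (zeta A k z : ℂ)) y)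
      (-(lam * (Bfun A k x : ℂ) * (v x / (zeta A k x : ℂ)))) x := by
  simp only [ofReal_Bfun]
  refine hasDerivAt_mul_sq_mul_deriv_div
    (u' := fun y => ((2 * k * π * sinh (2 * k * π * primitiveInv A y) / A y : ℝ) : ℂ))
    (q := (((2 * k * π) ^ 2 / A x : ℝ) : ℂ)) ?_ ?_ ?_ ?_ (hv.hasDerivAt_mul_deriv hA hx)
  · filter_upwards [Ioi_mem_nhds hx] with y hy using (hasDerivAt_zeta hA hy).ofReal_comp
  · filter_upwards [Ioi_mem_nhds hx] with y hy using hv.hasDerivAt hy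
  · exact Eventually.of_forall fun y => Complex.ofReal_ne_zero.mpr (cosh_pos _).ne'
  · have h := (hasDerivAt_mul_deriv_zeta (k := k) hA hx).ofReal_comp
    push_cast at h ⊢
    exact h

theorem tendsto_Bfun_mul_deriv_div_zeta (hA : ACond A) (hv : IsEigenfun A k lam v) :
    Tendsto (fun x => (Bfun A k x : ℂ) * deriv (fun z => v z / (zeta A k z : ℂ)) x)
      (𝓝[>] 0) (𝓝 0) := by
  have hF : Tendsto (primitiveInv A) (𝓝[>] 0) (𝓝 0) := by
    simpa [ContinuousWithinAt, primitiveInv] using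
      (hA.continuousOn_primitiveInv 0 self_mem_Ici).mono Ioi_subset_Ici_self
  have hζ : Tendsto (zeta A k) (𝓝[>] 0) (𝓝 1) := by
    simpa [ContinuousWithinAt, zeta_zero] using
      (continuousOn_zeta (k := k) hA 0 self_mem_Ici).mono Ioi_subset_Ici_self
  have hv0 : Tendsto v (𝓝[>] 0) (𝓝 1) := by
    simpa [ContinuousWithinAt, hv.2.2.2.1] using (hv.1 0 self_mem_Ici).mono Ioi_subset_Ici_self
  have hsinh : Tendsto (fun x => 2 * k * π * sinh (2 * k * π * primitiveInv A x))
      (𝓝[>] 0) (𝓝 0) := by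
    simpa using
      ((continuous_sinh.tendsto _).comp (hF.const_mul (2 * k * π))).const_mul (2 * k * π)
  have hlim := (hζ.ofReal.mul hv.2.2.2.2).sub (hv0.mul hsinh.ofReal)
  rw [Complex.ofReal_zero, mul_zero, mul_zero, sub_zero] at hlim
  refine hlim.congr' ?_
  filter_upwards [self_mem_nhdsWithin] with y (hy : 0 < y)
  rw [ofReal_Bfun, mul_sq_mul_deriv_div_eq (hasDerivAt_zeta hA hy).ofReal_comp (hv.hasDerivAt hy)
    (Complex.ofReal_ne_zero.mpr (cosh_pos _).ne')]
  push_cast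
  field_simp [(hA.2.2.1 y hy).ne']

end Bfun

/-- The normalized eigenfunction `ṽ_{k,λ} = v_{k,λ}/ζ_k` lies in
`C([0,∞)) ∩ C²((0,∞))` and satisfies `-(B_k ṽ')' = λ B_k ṽ` on `(0,∞)`, with `ṽ(0) = 1` and
`(B_k ṽ')(0⁺) = 0`. -/
theorem stmt1 (A : ℝ → ℝ) (hA : ACond A) (k : ℤ) (lam : ℂ) (v : ℝ → ℂ)
    (hv : IsEigenfun A k lam v) :
    ContinuousOn (fun x => v x / (zeta A k x : ℂ)) (Set.Ici 0) ∧
    ContDiffOn ℝ 2 (fun x => v x / (zeta A k x : ℂ)) (Set.Ioi 0) ∧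
    (∀ x > 0,
      -(deriv (fun y => (Bfun A k y : ℂ) * deriv (fun z => v z / (zeta A k z : ℂ)) y) x)
        = lam * (Bfun A k x : ℂ) * (v x / (zeta A k x : ℂ))) ∧
    v 0 / (zeta A k 0 : ℂ) = 1 ∧
    Filter.Tendsto (fun x => (Bfun A k x : ℂ) * deriv (fun z => v z / (zeta A k z : ℂ)) x)
      (nhdsWithin 0 (Set.Ioi 0)) (nhds 0) := by
  have hζ0 : ∀ x, (zeta A k x : ℂ) ≠ 0 := fun x => Complex.ofReal_ne_zero.mpr (cosh_pos _).ne'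
  refine ⟨?_, ?_, fun x hx => ?_, by simp [zeta_zero, hv.2.2.2.1],
    tendsto_Bfun_mul_deriv_div_zeta hA hv⟩
  · exact hv.1.div (Complex.continuous_ofReal.comp_continuousOn (continuousOn_zeta hA))
      fun x _ => hζ0 x
  · simp only [div_eq_mul_inv]
    exact hv.2.1.mul ((Complex.ofRealCLM.contDiff.comp_contDiffOn (contDiffOn_zeta hA)).inv
      fun x _ => hζ0 x)
  · rw [(hasDerivAt_Bfun_mul_deriv_div_zeta hA hv hx).deriv, neg_neg]
end

section
/- Fix η ≥ 0 and points ξ₁ = (x₁,z₁), ξ₂ = (x₂,z₂) of M^℘ = [0,∞) × I. Suppose π^℘ is a Borel probability measure on I with ψ_η(z₁)·ψ_η(z₂) = ∫_I ψ_η dπ^℘, and π^{[η]} is a Borel probability measure on [0,∞) with ṽ_{λ,η}(x₁)·ṽ_{λ,η}(x₂) = ∫_{[0,∞)} ṽ_{λ,η} dπ^{[η]} for all λ ∈ ℂ. Then the positive measure γ on M^℘ defined by γ(d(x₃,z₃)) := (ζ_η(x₁)ζ_η(x₂)/ζ_η(x₃))·π^{[η]}(dx₃)·π^℘(dz₃)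 satisfies w^℘_{λ,η}(ξ₁)·w^℘_{λ,η}(ξ₂) = ∫_{M^℘} w^℘_{λ,η}(ξ₃) γ(dξ₃) for all λ ∈ ℂ. -/
/-!
The integrand `ψ(z₃) ζ(x₃) ṽ(x₃)` splits into a function of `x₃` times a function of `z₃`, so
Fubini factors the integral over the product measure. In the `x₃`-factor, `ζ(x₃)` cancels against
the density `ζ(x₁)ζ(x₂)/ζ(x₃)`, and the product formulas for `ṽ` and `ψ` finish. The only analytic
input is the measurability of `ζ_η`, i.e. of the primitive `x ↦ ∫₀ˣ dy/A(y)`.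
-/

open MeasureTheory Set Filter

/-- `ζ_η(x) = cosh(√η ∫₀ˣ dy/A(y))`. -/
noncomputable def zetaEta (A : ℝ → ℝ) (η : ℝ) (x : ℝ) : ℝ :=
  Real.cosh (Real.sqrt η * ∫ y in (0 : ℝ)..x, 1 / A y)

/-- `w^℘_{λ,η}(x,z) = ψ_η(z) ζ_η(x) ṽ_{λ,η}(x)`. -/
noncomputable def wP (A : ℝ → ℝ) (η : ℝ) (ψ : ℝ → ℝ) (vt : ℂ → ℝ → ℂ)
    (lam : ℂ) (ξ : ℝ × ℝ) : ℂ :=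
  (ψ ξ.2 : ℂ) * (zetaEta A η ξ.1 : ℂ) * vt lam ξ.1

theorem continuousWithinAt_of_forall_Icc {α β : Type*} [LinearOrder α] [TopologicalSpace α]
    [OrderTopology α] [TopologicalSpace β] {T : Set α} {g : α → β} {x : α} (hx : x ∈ T)
    (h : ∀ a ∈ T, ∀ b ∈ T, ContinuousWithinAt g (Icc a b) x) : ContinuousWithinAt g T x := by
  rw [← inter_univ T, ← Iic_union_Ici (a := x), inter_union_distrib_left,
    continuousWithinAt_union]
  constructor
  · by_cases ha : ∃ a ∈ T, a < x
    · obtain ⟨a, haT, hax⟩ := ha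
      refine (h a haT x hx).mono_of_mem_nhdsWithin
        (mem_nhdsWithin.2 ⟨Ioi a, isOpen_Ioi, hax, fun y ⟨hay, _, hyx⟩ => ⟨hay.le, hyx⟩⟩)
    · push Not at ha
      exact continuousWithinAt_singleton.mono fun y ⟨hyT, hyx⟩ => le_antisymm hyx (ha y hyT)
  · by_cases hb : ∃ b ∈ T, x < b
    · obtain ⟨b, hbT, hxb⟩ := hb
      refine (h x hx b hbT).mono_of_mem_nhdsWithin
        (mem_nhdsWithin.2 ⟨Iio b, isOpen_Iio, hxb, fun y ⟨hyb, _, hxy⟩ => ⟨hxy, hyb.le⟩⟩)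
    · push Not at hb
      exact continuousWithinAt_singleton.mono fun y ⟨hyT, hxy⟩ => le_antisymm (hb y hyT) hxy

/-- The primitive is continuous on the interval of those `x` for which `f` is integrable between
`a` and `x`, and is the junk value `0` elsewhere. -/
theorem measurable_primitive {E : Type*} [NormedAddCommGroup E] [NormedSpace ℝ E]
    [MeasurableSpace E] [BorelSpace E] (f : ℝ → E) (a : ℝ) :
    Measurable fun x => ∫ t in a..x, f t := by
  classical
  set T : Set ℝ := {x | IntervalIntegrable f volume a x}
  have hT : T.OrdConnected := ⟨fun x hx y hy z hz =>
    hx.trans ((hx.symm.trans hy).mono_set (uIcc_subset_uIcc left_mem_uIcc (Icc_subset_uIcc hz)))⟩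
  have hcont : ContinuousOn (fun x => ∫ t in a..x, f t) T := fun x hx =>
    continuousWithinAt_of_forall_Icc hx fun b hb c hc =>
      intervalIntegral.continuousWithinAt_primitive (measure_singleton x)
        ((min_rec' (· ∈ T) .refl hb).symm.trans (max_rec' (· ∈ T) .refl hc))
  have hpiecewise : (fun x => ∫ t in a..x, f t) = T.piecewise (fun x => ∫ t in a..x, f t) 0 := by
    funext x
    by_cases hx : x ∈ T
    · simp [hx]
    · simp [hx, intervalIntegral.integral_undef hx]
  rw [hpiecewise]
  exact hcont.measurable_piecewise continuousOn_const hT.measurableSet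

theorem measurable_zetaEta (A : ℝ → ℝ) (η : ℝ) : Measurable (zetaEta A η) :=
  Real.continuous_cosh.measurable.comp ((measurable_primitive _ 0).const_mul _)

theorem integral_mul_withDensity_ofReal_div {X : Type*} [MeasurableSpace X]
    {μ : Measure X} {h : X → ℝ} (hm : Measurable h) (hpos : ∀ x, 0 < h x) {c : ℝ} (hc : 0 ≤ c)
    (g : X → ℂ) :
    ∫ x, (h x : ℂ) * g x ∂μ.withDensity (fun x => ENNReal.ofReal (c / h x))
      = c * ∫ x, g x ∂μ := by
  have hdensity : Measurable fun x => ENNReal.ofReal (c / h x) :=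
    (measurable_const.div hm).ennreal_ofReal
  rw [integral_withDensity_eq_integral_toReal_smul hdensity
    (Eventually.of_forall fun _ => ENNReal.ofReal_lt_top), ← integral_const_mul]
  congr 1
  funext x
  have hx : (h x : ℂ) ≠ 0 := Complex.ofReal_ne_zero.2 (hpos x).ne'
  rw [ENNReal.toReal_ofReal (div_nonneg hc (hpos x).le), Complex.real_smul, Complex.ofReal_div]
  field_simp

theorem stmt14_general (A : ℝ → ℝ) (η : ℝ) (ψ : ℝ → ℝ) (vt : ℂ → ℝ → ℂ) (x₁ x₂ : ℝ) (z₁ z₂ : ℝ)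
    (πP : Measure ℝ) (hπP : IsProbabilityMeasure πP)
    (hψprod : ψ z₁ * ψ z₂ = ∫ z, ψ z ∂πP)
    (πη : Measure ℝ) (hπη : IsProbabilityMeasure πη)
    (hvtprod : ∀ lam : ℂ, vt lam x₁ * vt lam x₂ = ∫ x, vt lam x ∂πη) :
    ∀ lam : ℂ,
      wP A η ψ vt lam (x₁, z₁) * wP A η ψ vt lam (x₂, z₂)
        = ∫ ξ₃, wP A η ψ vt lam ξ₃
            ∂((πη.withDensity
                (fun x₃ => ENNReal.ofReal (zetaEta A η x₁ * zetaEta A η x₂ / zetaEta A η x₃))).prod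
              πP) := by
  intro lam
  set ζ := zetaEta A η
  have hζm : Measurable ζ := measurable_zetaEta A η
  have hζpos : ∀ x, 0 < ζ x := fun _ => Real.cosh_pos _
  calc wP A η ψ vt lam (x₁, z₁) * wP A η ψ vt lam (x₂, z₂)
      = ((ζ x₁ * ζ x₂ : ℝ) : ℂ) * (vt lam x₁ * vt lam x₂) * ((ψ z₁ * ψ z₂ : ℝ) : ℂ) := by
        simp only [wP]
        push_cast
        ring
    _ = (∫ x, (ζ x : ℂ) * vt lam x
          ∂πη.withDensity (fun x₃ => ENNReal.ofReal (ζ x₁ * ζ x₂ / ζ x₃)))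
          * ∫ z, (ψ z : ℂ) ∂πP := by
        rw [integral_mul_withDensity_ofReal_div hζm hζpos
          (mul_pos (hζpos x₁) (hζpos x₂)).le, hvtprod, hψprod, integral_complex_ofReal]
    _ = _ := by
        rw [← integral_prod_mul]
        congr 1
        funext ξ
        simp only [wP]
        ring

/-- If `π^℘` realizes the product formula for `ψ_η` at `z₁, z₂ ∈ I` and
`π^{[η]}` realizes the product formula for `ṽ_{λ,η}` at `x₁, x₂`, then the measure
`γ(d(x₃,z₃)) = (ζ_η(x₁)ζ_η(x₂)/ζ_η(x₃)) π^{[η]}(dx₃) π^℘(dz₃)` realizes the product formula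
for `w^℘_{λ,η}` at `ξ₁ = (x₁,z₁)`, `ξ₂ = (x₂,z₂)`, for all `λ ∈ ℂ`. -/
theorem stmt14 (A : ℝ → ℝ) (hA : ACond A) (η : ℝ) (hη : 0 ≤ η)
    (I : Set ℝ) (ψ : ℝ → ℝ) (hψm : Measurable ψ)
    (vt : ℂ → ℝ → ℂ) (hvtm : ∀ lam : ℂ, Measurable (vt lam))
    (x₁ x₂ : ℝ) (hx₁ : 0 ≤ x₁) (hx₂ : 0 ≤ x₂) (z₁ z₂ : ℝ) (hz₁ : z₁ ∈ I) (hz₂ : z₂ ∈ I)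
    (πP : Measure ℝ) (hπP : IsProbabilityMeasure πP) (hπPI : πP Iᶜ = 0)
    (hψint : Integrable ψ πP)
    (hψprod : ψ z₁ * ψ z₂ = ∫ z, ψ z ∂πP)
    (πη : Measure ℝ) (hπη : IsProbabilityMeasure πη)
    (hvtint : ∀ lam : ℂ, Integrable (vt lam) πη)
    (hvtprod : ∀ lam : ℂ, vt lam x₁ * vt lam x₂ = ∫ x, vt lam x ∂πη) :
    ∀ lam : ℂ,
      wP A η ψ vt lam (x₁, z₁) * wP A η ψ vt lam (x₂, z₂)
        = ∫ ξ₃, wP A η ψ vt lam ξ₃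
            ∂((πη.withDensity
                (fun x₃ => ENNReal.ofReal (zetaEta A η x₁ * zetaEta A η x₂ / zetaEta A η x₃))).prod
              πP) :=
  stmt14_general A η ψ vt x₁ x₂ z₁ z₂ πP hπP hψprod πη hπη hvtprod
end

section
/- Suppose in addition that lim_{x→∞} p(x) = ∞. Let c ≥ 0 and let τ be a positive Borel measure on (0,∞) which is finite on the complement of every neighbourhood of 0 and satisfies ∫_{(0,∞)} (1 − v_λ(x)) τ(dx) < ∞ for every λ ≥ 0; set ψ(λ) := cλ + ∫_{(0,∞)} (1 − v_λ(x)) τ(dx). Suppose that for each t > 0 there exists a Borel probability measure μ_t on [0,∞) such that ∫_{[0,∞)} v_λ dμ_t = e^{−tψ(λ)} for all λ ≥ 0. Then there exists a constant C > 0, independent of λ, such that ψ(λ) ≤ C(1+λ) for all λ ≥ 0. -/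
/-!
Near `0` the solution `v₁` stays above `1/2`. There the quasi-derivative
`p (v_λ' - 2λ v₁')` has derivative `λ p (2 v₁ - v_λ) ≥ 0` and tends to `0` at `0`, so
`v_λ' ≥ 2λ v₁'`; integrating from `0` gives `1 - v_λ ≤ 2λ (1 - v₁)` on some `(0, ε]`.
Away from `0` one only uses `1 - v_λ ≤ 2` and `τ(ε, ∞) < ∞`, so
`∫ (1 - v_λ) dτ ≤ 2λ ∫ (1 - v₁) dτ + 2 τ(ε, ∞)`.
-/

open MeasureTheory Set Filter
open scoped Topology

theorem le_of_tendsto_of_hasDerivAt_nonneg {f f' : ℝ → ℝ} {a b L : ℝ} (hab : a < b)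
    (hf : ∀ x ∈ Ioc a b, HasDerivAt f (f' x) x) (hf' : ∀ x ∈ Ioo a b, 0 ≤ f' x)
    (hlim : Tendsto f (𝓝[>] a) (𝓝 L)) : L ≤ f b := by
  have hmono : MonotoneOn f (Ioc a b) := by
    refine monotoneOn_of_hasDerivWithinAt_nonneg (f' := f') (convex_Ioc a b)
      (fun x hx => (hf x hx).continuousAt.continuousWithinAt) (fun x hx => ?_) (fun x hx => ?_)
    · rw [interior_Ioc] at hx ⊢
      exact (hf x (Ioo_subset_Ioc_self hx)).hasDerivWithinAt
    · rw [interior_Ioc] at hx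
      exact hf' x hx
  refine le_of_tendsto hlim ?_
  filter_upwards [Ioc_mem_nhdsGT hab] with x hx
  exact hmono hx (right_mem_Ioc.2 hab) hx.2

structure IsNeumannSolution (p : ℝ → ℝ) (lam : ℝ) (u : ℝ → ℝ) : Prop where
  continuousOn : ContinuousOn u (Ici 0)
  differentiableAt : ∀ x > 0, DifferentiableAt ℝ u x
  hasDerivAt_quasiDeriv : ∀ x > 0, HasDerivAt (fun y => p y * deriv u y) (-(lam * p x * u x)) x
  apply_zero : u 0 = 1
  tendsto_quasiDeriv : Tendsto (fun x => p x * deriv u x) (𝓝[>] 0) (𝓝 0)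

namespace IsNeumannSolution

variable {p u w : ℝ → ℝ} {lam mu s x : ℝ}

theorem tendsto_nhdsGT (hu : IsNeumannSolution p lam u) : Tendsto u (𝓝[>] 0) (𝓝 1) := by
  have h := hu.continuousOn 0 self_mem_Ici
  rw [ContinuousWithinAt, hu.apply_zero] at h
  exact h.mono_left (nhdsWithin_mono 0 Ioi_subset_Ici_self)

theorem mul_deriv_le_deriv (hu : IsNeumannSolution p lam u) (hw : IsNeumannSolution p mu w)
    (hx : 0 < x) (hp : ∀ y ∈ Ioc 0 x, 0 < p y)
    (hcmp : ∀ y ∈ Ioc 0 x, lam * u y ≤ s * mu * w y) : s * deriv w x ≤ deriv u x := by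
  have hq : 0 ≤ p x * deriv u x - s * (p x * deriv w x) := by
    refine le_of_tendsto_of_hasDerivAt_nonneg
      (f := fun y => p y * deriv u y - s * (p y * deriv w y)) hx
      (fun y hy => (hu.hasDerivAt_quasiDeriv y hy.1).sub
        ((hw.hasDerivAt_quasiDeriv y hy.1).const_mul s)) (fun y hy => ?_) ?_
    · have := mul_le_mul_of_nonneg_left (hcmp y (Ioo_subset_Ioc_self hy))
        (hp y (Ioo_subset_Ioc_self hy)).le
      linarith
    · simpa using hu.tendsto_quasiDeriv.sub (hw.tendsto_quasiDeriv.const_mul s)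
  have hpx := hp x (right_mem_Ioc.2 hx)
  nlinarith

theorem one_sub_le_mul_one_sub (hu : IsNeumannSolution p lam u) (hw : IsNeumannSolution p mu w)
    (hx : 0 < x) (hp : ∀ y ∈ Ioc 0 x, 0 < p y)
    (hcmp : ∀ y ∈ Ioc 0 x, lam * u y ≤ s * mu * w y) : 1 - u x ≤ s * (1 - w x) := by
  have h : 1 - s * 1 ≤ u x - s * w x :=
    le_of_tendsto_of_hasDerivAt_nonneg (f := fun y => u y - s * w y) hx
      (fun y hy => (hu.differentiableAt y hy.1).hasDerivAt.sub
        ((hw.differentiableAt y hy.1).hasDerivAt.const_mul s))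
      (fun y hy => sub_nonneg.2 <| hu.mul_deriv_le_deriv hw hy.1
        (fun z hz => hp z ⟨hz.1, hz.2.trans hy.2.le⟩)
        (fun z hz => hcmp z ⟨hz.1, hz.2.trans hy.2.le⟩))
      (hu.tendsto_nhdsGT.sub (hw.tendsto_nhdsGT.const_mul s))
  linarith

end IsNeumannSolution

theorem integral_le_mul_integral_add_of_le {τ : Measure ℝ} {f g : ℝ → ℝ} {ε A B : ℝ}
    (hτ : ∀ᵐ x ∂τ, 0 < x) (hfin : τ (Ioi ε) ≠ ⊤) (hf : Integrable f τ) (hg : Integrable g τ)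
    (hg₀ : ∀ᵐ x ∂τ, 0 ≤ g x) (hA : 0 ≤ A) (hfg : ∀ x ∈ Ioc 0 ε, f x ≤ A * g x)
    (hfB : ∀ x ∈ Ioi ε, f x ≤ B) :
    ∫ x, f x ∂τ ≤ A * ∫ x, g x ∂τ + τ.real (Ioi ε) * B := by
  have hB : Integrable ((Ioi ε).indicator fun _ => B) τ :=
    (integrable_indicator_iff measurableSet_Ioi).2 (integrableOn_const hfin)
  calc ∫ x, f x ∂τ ≤ ∫ x, (A * g x + (Ioi ε).indicator (fun _ => B) x) ∂τ := by
        refine integral_mono_ae hf ((hg.const_mul A).add hB) ?_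
        filter_upwards [hτ, hg₀] with x hx hgx
        rcases le_or_gt x ε with hxε | hxε
        · rw [indicator_of_notMem (show x ∉ Ioi ε from not_lt.2 hxε), add_zero]
          exact hfg x ⟨hx, hxε⟩
        · rw [indicator_of_mem (show x ∈ Ioi ε from hxε)]
          nlinarith [hfB x hxε]
    _ = A * ∫ x, g x ∂τ + τ.real (Ioi ε) * B := by
        rw [integral_add (hg.const_mul A) hB, integral_const_mul,
          integral_indicator_const _ measurableSet_Ioi, smul_eq_mul]

theorem stmt17_general (p : ℝ → ℝ)
    (hppos : ∀ x > 0, 0 < p x)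
    -- the eigenfunctions `v_λ`, `λ ≥ 0`:
    (v : ℝ → ℝ → ℝ)
    (hvsol : ∀ lam : ℝ, 0 ≤ lam →
      ContinuousOn (v lam) (Set.Ici 0) ∧
      (∀ x > 0, DifferentiableAt ℝ (v lam) x) ∧
      (∀ x > 0, HasDerivAt (fun y => p y * deriv (v lam) y)
        (-(lam * p x * v lam x)) x) ∧
      v lam 0 = 1 ∧
      Filter.Tendsto (fun x => p x * deriv (v lam) x) (nhdsWithin 0 (Set.Ioi 0)) (nhds 0))
    (hvbd : ∀ lam : ℝ, 0 ≤ lam → ∀ x : ℝ, 0 ≤ x → |v lam x| ≤ 1)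
    -- the data defining `ψ`:
    (c : ℝ) (hc : 0 ≤ c)
    (τ : Measure ℝ) (hτconc : τ (Set.Ioi (0 : ℝ))ᶜ = 0)
    (hτfin : ∀ ε : ℝ, 0 < ε → τ (Set.Ici ε) < ⊤)
    (hτint : ∀ lam : ℝ, 0 ≤ lam → Integrable (fun x => 1 - v lam x) τ) :
    ∃ C : ℝ, 0 < C ∧ ∀ lam : ℝ, 0 ≤ lam →
      c * lam + (∫ x, (1 - v lam x) ∂τ) ≤ C * (1 + lam) := by
  have hsol (lam : ℝ) (hlam : 0 ≤ lam) : IsNeumannSolution p lam (v lam) :=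
    let ⟨h₁, h₂, h₃, h₄, h₅⟩ := hvsol lam hlam
    ⟨h₁, h₂, h₃, h₄, h₅⟩
  obtain ⟨ε, hε, hv₁⟩ : ∃ ε > 0, ∀ x ∈ Ioc 0 ε, 1 / 2 < v 1 x :=
    mem_nhdsGT_iff_exists_Ioc_subset.1
      ((hsol 1 zero_le_one).tendsto_nhdsGT (Ioi_mem_nhds (by norm_num)))
  have hτpos : ∀ᵐ x ∂τ, 0 < x := ae_iff.2 hτconc
  have hv₁_le : ∀ᵐ x ∂τ, 0 ≤ 1 - v 1 x := by
    filter_upwards [hτpos] with x hx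
    linarith [(abs_le.1 (hvbd 1 zero_le_one x hx.le)).2]
  set K := ∫ x, (1 - v 1 x) ∂τ
  set T := τ.real (Ioi ε)
  have hK : 0 ≤ K := integral_nonneg_of_ae hv₁_le
  have hT : 0 ≤ T := measureReal_nonneg
  refine ⟨c + 2 * K + 2 * T + 1, by positivity, fun lam hlam => ?_⟩
  have hψ : ∫ x, (1 - v lam x) ∂τ ≤ 2 * lam * K + T * 2 := by
    refine integral_le_mul_integral_add_of_le hτpos
      (measure_ne_top_of_subset Ioi_subset_Ici_self (hτfin ε hε).ne) (hτint lam hlam)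
      (hτint 1 zero_le_one) hv₁_le (by positivity) (fun x hx => ?_) (fun x hx => ?_)
    · refine (hsol lam hlam).one_sub_le_mul_one_sub (hsol 1 zero_le_one) hx.1
        (fun y hy => hppos y hy.1) (fun y hy => ?_)
      have hvy := (abs_le.1 (hvbd lam hlam y hy.1.le)).2
      have h₁y := hv₁ y ⟨hy.1, hy.2.trans hx.2⟩
      nlinarith
    · linarith [(abs_le.1 (hvbd lam hlam x (hε.trans hx).le)).1]
  nlinarith [mul_nonneg hc hlam, mul_nonneg hK hlam, mul_nonneg hT hlam]

/-- Under the standing assumptions on the Sturm-Liouville coefficient `p`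
(positivity, local absolute continuity, `0` regular/entrance, the structural `η`-condition)
and on the eigenfunctions `v_λ` (`|v_λ| ≤ 1`, `v_λ(x) → 0` as `x → ∞` for `λ > 0`), if
`lim_{x→∞} p(x) = ∞`, `τ` is a positive measure on `(0,∞)` finite away from `0` with
`∫ (1 − v_λ) dτ < ∞`, `ψ(λ) = cλ + ∫ (1 − v_λ) dτ`, and for each `t > 0` there is a
probability measure `μ_t` with `∫ v_λ dμ_t = e^{−tψ(λ)}`, then `ψ(λ) ≤ C(1+λ)` for some
constant `C > 0` independent of `λ`. -/
theorem stmt17 (p : ℝ → ℝ)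
    (hppos : ∀ x > 0, 0 < p x)
    (hpcont : ContinuousOn p (Set.Ioi 0))
    -- local absolute continuity of `p` on `(0,∞)`, via the FTC characterization:
    (hpAC : ∀ c x : ℝ, 0 < c → c ≤ x →
      IntervalIntegrable (deriv p) volume c x ∧ p x - p c = ∫ t in c..x, deriv p t)
    -- `0` is a regular or entrance endpoint:
    (h0 : IntegrableOn (fun y => (∫ x in y..1, 1 / p x) * p y) (Set.Ioc 0 1))
    -- the structural η-condition:
    (hη : ∃ η : ℝ → ℝ, ContDiffOn ℝ 1 η (Set.Ioi 0) ∧ (∀ x > 0, 0 ≤ η x) ∧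
      AntitoneOn (fun x => deriv p x / p x - η x) (Set.Ioi 0) ∧
      Filter.Tendsto (fun x => deriv p x / p x - η x) Filter.atTop (nhds 0) ∧
      AntitoneOn (fun x => (1 / 2) * deriv η x - (1 / 4) * (η x) ^ 2
        + (deriv p x / (2 * p x)) * η x) (Set.Ioi 0))
    (hpinf : Filter.Tendsto p Filter.atTop Filter.atTop)
    -- the eigenfunctions `v_λ`, `λ ≥ 0`:
    (v : ℝ → ℝ → ℝ)
    (hvsol : ∀ lam : ℝ, 0 ≤ lam →
      ContinuousOn (v lam) (Set.Ici 0) ∧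
      (∀ x > 0, DifferentiableAt ℝ (v lam) x) ∧
      (∀ x > 0, HasDerivAt (fun y => p y * deriv (v lam) y)
        (-(lam * p x * v lam x)) x) ∧
      v lam 0 = 1 ∧
      Filter.Tendsto (fun x => p x * deriv (v lam) x) (nhdsWithin 0 (Set.Ioi 0)) (nhds 0))
    (hvbd : ∀ lam : ℝ, 0 ≤ lam → ∀ x : ℝ, 0 ≤ x → |v lam x| ≤ 1)
    (hvlim : ∀ lam : ℝ, 0 < lam → Filter.Tendsto (v lam) Filter.atTop (nhds 0))
    -- the data defining `ψ`:
    (c : ℝ) (hc : 0 ≤ c)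
    (τ : Measure ℝ) (hτconc : τ (Set.Ioi (0 : ℝ))ᶜ = 0)
    (hτfin : ∀ ε : ℝ, 0 < ε → τ (Set.Ici ε) < ⊤)
    (hτint : ∀ lam : ℝ, 0 ≤ lam → Integrable (fun x => 1 - v lam x) τ)
    -- the convolution semigroup hypothesis `∫ v_λ dμ_t = e^{−tψ(λ)}`:
    (hμ : ∀ t : ℝ, 0 < t → ∃ μ : Measure ℝ, IsProbabilityMeasure μ ∧
      μ (Set.Ici (0 : ℝ))ᶜ = 0 ∧
      ∀ lam : ℝ, 0 ≤ lam →
        ∫ x, v lam x ∂μ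
          = Real.exp (-(t * (c * lam + ∫ x, (1 - v lam x) ∂τ)))) :
    ∃ C : ℝ, 0 < C ∧ ∀ lam : ℝ, 0 ≤ lam →
      c * lam + (∫ x, (1 - v lam x) ∂τ) ≤ C * (1 + lam) :=
  stmt17_general p hppos v hvsol hvbd c hc τ hτconc hτfin hτint
end
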